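/- arXiv:1212.3888 — 4 statements merged into one kernel-verified Lean document; each statement's English description precedes it below -/
import Mathlib

section
/- Let d ≥ 1, let Δ : Matrix ((Fin d) × (Fin d)) (Fin d) ℂ be the branching matrix (Δ (j,k) i = 1 if j = i = k, else 0), let S be a finite index set, and for each σ ∈ S let P_σ : Matrix (Fin d) (Fin d) ℂ be a permutation matrix. For real numbers λ and α_σ (σ ∈ S), set Q = (−λ) • 1 + Σ_{σ∈S} α_σ • P_σ. Then Δ * Q = ((−λ) • (1 ⊗ₖ 1) + Σ_{σ∈S} α_σ • (P_σ ⊗ₖ P_σ)) * Δ. -/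
open Matrix
open Kronecker

/-- The branching matrix intertwines with a group-based rate matrix:
`Δ * Q = ((−λ) • (1 ⊗ₖ 1) + Σ_σ α_σ • (P_σ ⊗ₖ P_σ)) * Δ`. -/
theorem branching_intertwines_rate_matrix
    (d : ℕ) (hd : 1 ≤ d)
    (Δ : Matrix (Fin d × Fin d) (Fin d) ℂ)
    (hΔ : ∀ p : Fin d × Fin d, ∀ i : Fin d,
      Δ p i = if p.1 = i ∧ p.2 = i then 1 else 0)
    (S : Type*) [Fintype S]
    (P : S → Matrix (Fin d) (Fin d) ℂ)
    (hP : ∀ σ : S, ∃ π : Equiv.Perm (Fin d),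
      ∀ j i : Fin d, P σ j i = if j = π i then 1 else 0)
    (lam : ℝ) (α : S → ℝ)
    (Q : Matrix (Fin d) (Fin d) ℂ)
    (hQ : Q = (-lam : ℂ) • (1 : Matrix (Fin d) (Fin d) ℂ) + ∑ σ : S, (α σ : ℂ) • P σ) :
    Δ * Q =
      ((-lam : ℂ) • ((1 : Matrix (Fin d) (Fin d) ℂ) ⊗ₖ (1 : Matrix (Fin d) (Fin d) ℂ))
        + ∑ σ : S, (α σ : ℂ) • (P σ ⊗ₖ P σ)) * Δ := by
  have key : ∀ σ : S, Δ * P σ = (P σ ⊗ₖ P σ) * Δ := by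
    intro σ
    obtain ⟨π, hπ⟩ := hP σ
    ext ⟨j, k⟩ i
    have L : (Δ * P σ) (j, k) i = if j = k then P σ j i else 0 := by
      rw [Matrix.mul_apply, Finset.sum_eq_single k]
      · rw [hΔ]; by_cases h : j = k <;> simp [h]
      · intro b _ hb; rw [hΔ]; simp [Ne.symm hb]
      · simp
    have R : ((P σ ⊗ₖ P σ) * Δ) (j, k) i = P σ j i * P σ k i := by
      rw [Matrix.mul_apply, Fintype.sum_prod_type,
        Finset.sum_eq_single i ?_ (by simp)]
      · rw [Finset.sum_eq_single i ?_ (by simp)]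
        · rw [hΔ]; simp
        · intro b _ hb; rw [hΔ]; simp [hb]
      · intro b _ hb
        refine Finset.sum_eq_zero fun c _ => ?_
        rw [hΔ]; simp [hb]
    rw [L, R, hπ, hπ]
    by_cases h1 : j = π i <;> by_cases h2 : k = π i <;> simp [h1, h2] <;> aesop
  have one_key : Δ * (1 : Matrix (Fin d) (Fin d) ℂ) =
      ((1 : Matrix (Fin d) (Fin d) ℂ) ⊗ₖ (1 : Matrix (Fin d) (Fin d) ℂ)) * Δ := by
    ext ⟨j, k⟩ i
    have L : (Δ * (1 : Matrix (Fin d) (Fin d) ℂ)) (j, k) i = Δ (j, k) i := by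
      rw [Matrix.mul_one]
    have R : (((1 : Matrix (Fin d) (Fin d) ℂ) ⊗ₖ (1 : Matrix (Fin d) (Fin d) ℂ)) * Δ) (j, k) i
        = (1 : Matrix (Fin d) (Fin d) ℂ) j i * (1 : Matrix (Fin d) (Fin d) ℂ) k i := by
      rw [Matrix.mul_apply, Fintype.sum_prod_type,
        Finset.sum_eq_single i ?_ (by simp)]
      · rw [Finset.sum_eq_single i ?_ (by simp)]
        · rw [hΔ]; simp
        · intro b _ hb; rw [hΔ]; simp [hb]
      · intro b _ hb
        refine Finset.sum_eq_zero fun c _ => ?_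
        rw [hΔ]; simp [hb]
    rw [L, R, hΔ, Matrix.one_apply, Matrix.one_apply]
    by_cases h1 : j = i <;> by_cases h2 : k = i <;> simp [h1, h2] <;> aesop
  subst hQ
  rw [Matrix.mul_add, Matrix.add_mul, Matrix.mul_smul, one_key, Matrix.smul_mul,
    Matrix.mul_sum, Matrix.sum_mul]
  congr 1
  refine Finset.sum_congr rfl fun σ _ => ?_
  rw [Matrix.mul_smul, key σ, Matrix.smul_mul]
end

section
/- Let d ≥ 1, let Δ : Matrix ((Fin d) × (Fin d)) (Fin d) ℂ be the branching matrix (Δ (j,k) i = 1 if j = i = k, else 0), let S be a finite index set, and for each σ ∈ S let P_σ : Matrix (Fin d) (Fin d) ℂ be a permutation matrix. For real numbers λ and α_σ (σ ∈ S), set Q = (−λ) • 1 + Σ_{σ∈S} α_σ • P_σ. Then Δ * exp(Q) = e^{−λ} • (exp(Σ_{σ∈S} α_σ • (P_σ ⊗ₖ P_σ)) * Δ), where exp denotes the matrix exponential. In words: Markov evolution followed by a branching event equals a branching event followed by correlated Markov evolution of the two copies. -/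
open Matrix
open Kronecker
open NormedSpace

/-!
Branching `Δ` sends `ξ_i` to `ξ_i ⊗ ξ_i`, and a permutation matrix `P` sends basis vectors to basis
vectors, so both `Δ P` and `(P ⊗ₖ P) Δ` send `ξ_i` to `P ξ_i ⊗ P ξ_i`. Summing, `Δ A = B Δ` for `A = Σ α_σ P_σ` and
`B = Σ α_σ (P_σ ⊗ₖ P_σ)`, and an intertwining relation passes termwise to the exponential series:
`Δ exp A = exp B Δ`. The scalar part `-λ • 1` of `Q` commutes with `A` and contributes `e^{-λ}`.
-/

def branchingMatrix (n R : Type*) [DecidableEq n] [Zero R] [One R] : Matrix (n × n) n R :=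
  of fun p i => if p.1 = i ∧ p.2 = i then 1 else 0

theorem branchingMatrix_mul_eq_kronecker_mul {R m n : Type*} [NonAssocSemiring R]
    [Fintype m] [DecidableEq m] [Fintype n] [DecidableEq n] (f : n → m) {P : Matrix m n R}
    (hP : ∀ j i, P j i = if j = f i then 1 else 0) :
    branchingMatrix m R * P = (P ⊗ₖ P) * branchingMatrix n R := by
  ext ⟨j, k⟩ i
  simp only [branchingMatrix, mul_apply, of_apply, kroneckerMap_apply, Fintype.sum_prod_type, hP,
    ite_and, mul_ite, mul_one, mul_zero, Finset.sum_ite_eq', Finset.mem_univ, if_true]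
  split_ifs <;> simp_all

namespace Matrix

variable {𝕂 m n : Type*} [RCLike 𝕂] [Fintype m] [DecidableEq m] [Fintype n] [DecidableEq n]

attribute [local instance] Matrix.linftyOpNormedRing Matrix.linftyOpNormedAlgebra

theorem mul_exp_eq_exp_mul_of_mul_eq {D : Matrix m n 𝕂} {A : Matrix n n 𝕂} {B : Matrix m m 𝕂}
    (h : D * A = B * D) : D * exp A = exp B * D := by
  have hpow (k : ℕ) : D * A ^ k = B ^ k * D := by
    induction k with
    | zero => simp
    | succ k ih => rw [pow_succ, ← Matrix.mul_assoc, ih, Matrix.mul_assoc, h, ← Matrix.mul_assoc,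
        ← pow_succ]
  have hA := (exp_series_hasSum_exp' (𝕂 := 𝕂) A).map (mulLeftLinearMap n 𝕂 D)
    (continuous_const.matrix_mul continuous_id)
  have hB := (exp_series_hasSum_exp' (𝕂 := 𝕂) B).map (mulRightLinearMap m 𝕂 D)
    (continuous_id.matrix_mul continuous_const)
  refine hA.unique (hB.congr_fun fun k => ?_)
  simp [hpow]

theorem exp_smul_one_add (c : 𝕂) (A : Matrix n n 𝕂) : exp (c • 1 + A) = exp c • exp A := by
  have hc : exp (algebraMap 𝕂 (Matrix n n 𝕂) c) = algebraMap 𝕂 _ (exp c) :=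
    (algebraMap_exp_comm c).symm
  rw [exp_add_of_commute _ _ ((Commute.one_left A).smul_left c), ← Algebra.algebraMap_eq_smul_one,
    hc, Algebra.algebraMap_eq_smul_one, Matrix.smul_mul, Matrix.one_mul]

end Matrix

theorem branching_intertwines_exp_rate_matrix_general
    (d : ℕ)
    (Δ : Matrix (Fin d × Fin d) (Fin d) ℂ)
    (hΔ : ∀ p : Fin d × Fin d, ∀ i : Fin d,
      Δ p i = if p.1 = i ∧ p.2 = i then 1 else 0)
    (S : Type*) [Fintype S]
    (P : S → Matrix (Fin d) (Fin d) ℂ)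
    (hP : ∀ σ : S, ∃ π : Equiv.Perm (Fin d),
      ∀ j i : Fin d, P σ j i = if j = π i then 1 else 0)
    (lam : ℝ) (α : S → ℝ)
    (Q : Matrix (Fin d) (Fin d) ℂ)
    (hQ : Q = (-lam : ℂ) • (1 : Matrix (Fin d) (Fin d) ℂ) + ∑ σ : S, (α σ : ℂ) • P σ) :
    Δ * exp Q =
      (Real.exp (-lam) : ℂ) •
        (exp (∑ σ : S, (α σ : ℂ) • (P σ ⊗ₖ P σ)) * Δ) := by
  obtain rfl : Δ = branchingMatrix (Fin d) ℂ := ext hΔ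
  have hperm (σ : S) :
      branchingMatrix (Fin d) ℂ * P σ = (P σ ⊗ₖ P σ) * branchingMatrix (Fin d) ℂ :=
    let ⟨π, hπ⟩ := hP σ
    branchingMatrix_mul_eq_kronecker_mul π hπ
  have hsum : branchingMatrix (Fin d) ℂ * ∑ σ, (α σ : ℂ) • P σ =
      (∑ σ, (α σ : ℂ) • (P σ ⊗ₖ P σ)) * branchingMatrix (Fin d) ℂ := by
    simp only [Matrix.mul_sum, Matrix.sum_mul, Matrix.mul_smul, Matrix.smul_mul, hperm]
  rw [hQ, exp_smul_one_add, ← Complex.exp_eq_exp_ℂ, ← Complex.ofReal_neg, ← Complex.ofReal_exp,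
    Matrix.mul_smul, mul_exp_eq_exp_mul_of_mul_eq hsum]

/-- Markov evolution followed by branching equals branching followed by
correlated Markov evolution:
`Δ * exp(Q) = e^{−λ} • (exp(Σ_σ α_σ • (P_σ ⊗ₖ P_σ)) * Δ)`. -/
theorem branching_intertwines_exp_rate_matrix
    (d : ℕ) (hd : 1 ≤ d)
    (Δ : Matrix (Fin d × Fin d) (Fin d) ℂ)
    (hΔ : ∀ p : Fin d × Fin d, ∀ i : Fin d,
      Δ p i = if p.1 = i ∧ p.2 = i then 1 else 0)
    (S : Type*) [Fintype S]
    (P : S → Matrix (Fin d) (Fin d) ℂ)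
    (hP : ∀ σ : S, ∃ π : Equiv.Perm (Fin d),
      ∀ j i : Fin d, P σ j i = if j = π i then 1 else 0)
    (lam : ℝ) (α : S → ℝ)
    (Q : Matrix (Fin d) (Fin d) ℂ)
    (hQ : Q = (-lam : ℂ) • (1 : Matrix (Fin d) (Fin d) ℂ) + ∑ σ : S, (α σ : ℂ) • P σ) :
    Δ * exp Q =
      (Real.exp (-lam) : ℂ) •
        (exp (∑ σ : S, (α σ : ℂ) • (P σ ⊗ₖ P σ)) * Δ) :=
  branching_intertwines_exp_rate_matrix_general d Δ hΔ S P hP lam α Q hQ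
end

section
/- Let r ≥ 2, ω = exp(2πi/r), m ≥ 1, let e, e' be nonempty subsets (Finsets) of Fin m, and let s, s' be natural numbers with 1 ≤ s ≤ r−1 and 1 ≤ s' ≤ r−1. Then Σ_{u : Fin m → ZMod r} ω^{(Σ_{t∈e} s·(u t).val) − (Σ_{t∈e'} s'·(u t).val)} = r^m if e = e' and s = s', and the sum equals 0 otherwise. (Here ω is raised to the integer exponent Σ_{t∈e} s·(u t).val − Σ_{t∈e'} s'·(u t).val.) This is the orthogonality relation G_s · F_{s'} = δ_{s s'}·1 between the rectangular matrices used in the second part of the inversion of the ℤ_r model. -/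
open Matrix

private lemma zpow_sum_aux {ι : Type*} (a : ℂ) (ha : a ≠ 0) (s : Finset ι) (f : ι → ℤ) :
    a ^ (∑ i ∈ s, f i) = ∏ i ∈ s, a ^ f i := by
  classical
  induction s using Finset.cons_induction with
  | empty => simp
  | cons i s hi ih => rw [Finset.sum_cons, Finset.prod_cons, zpow_add₀ ha, ih]

private lemma sum_zmod_pow (r : ℕ) [NeZero r] (ζ : ℂ) (hζ : ζ ^ r = 1) :
    ∑ x : ZMod r, ζ ^ x.val = if ζ = 1 then (r : ℂ) else 0 := by
  have h1 : ∑ x : ZMod r, ζ ^ x.val = ∑ i ∈ Finset.range r, ζ ^ i := by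
    refine Finset.sum_bij' (fun x _ => x.val) (fun i _ => (i : ZMod r)) ?_ ?_ ?_ ?_ ?_
    · intro x _; exact Finset.mem_range.mpr (ZMod.val_lt x)
    · intro i _; exact Finset.mem_univ _
    · intro x _; exact ZMod.natCast_zmod_val x
    · intro i hi; exact ZMod.val_natCast_of_lt (Finset.mem_range.mp hi)
    · intro x _; rfl
  rw [h1]
  by_cases h : ζ = 1
  · simp [h]
  · rw [if_neg h, geom_sum_eq h, hζ, sub_self, zero_div]

/-- Orthogonality relation `G_s · F_{s'} = δ_{ss'}·1` for the rectangular
matrices in the second part of the inversion of the ℤ_r model: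
`Σ_u ω^{Σ_{t∈e} s·(u t).val − Σ_{t∈e'} s'·(u t).val} = r^m` if `e = e'` and `s = s'`,
and `0` otherwise. -/
theorem Zr_inversion_orthogonality
    (r : ℕ) [NeZero r] (hr : 2 ≤ r) (m : ℕ) (hm : 1 ≤ m)
    (ω : ℂ) (hω : ω = Complex.exp (2 * Real.pi * Complex.I / r))
    (e e' : Finset (Fin m)) (he : e.Nonempty) (he' : e'.Nonempty)
    (s s' : ℕ) (hs1 : 1 ≤ s) (hs2 : s ≤ r - 1) (hs1' : 1 ≤ s') (hs2' : s' ≤ r - 1) :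
    (∑ u : Fin m → ZMod r,
        ω ^ (((∑ t ∈ e, s * (u t).val : ℕ) : ℤ) - ((∑ t ∈ e', s' * (u t).val : ℕ) : ℤ))) =
      if e = e' ∧ s = s' then (r : ℂ) ^ m else 0 := by
  classical
  have hprim : IsPrimitiveRoot ω r := by
    rw [hω]
    exact Complex.isPrimitiveRoot_exp r (NeZero.ne r)
  have hω0 : ω ≠ 0 := hprim.ne_zero (NeZero.ne r)
  have hωr : ω ^ r = 1 := hprim.pow_eq_one
  set c : Fin m → ℤ := fun t => (if t ∈ e then (s : ℤ) else 0) - (if t ∈ e' then (s' : ℤ) else 0)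
    with hc
  -- rewrite exponent as a full sum
  have hexp : ∀ u : Fin m → ZMod r,
      ((∑ t ∈ e, s * (u t).val : ℕ) : ℤ) - ((∑ t ∈ e', s' * (u t).val : ℕ) : ℤ)
        = ∑ t : Fin m, c t * ((u t).val : ℤ) := by
    intro u
    have h1 : ((∑ t ∈ e, s * (u t).val : ℕ) : ℤ)
        = ∑ t : Fin m, (if t ∈ e then (s : ℤ) else 0) * ((u t).val : ℤ) := by
      simp only [ite_mul, zero_mul, Finset.sum_ite_mem, Finset.univ_inter]
      push_cast
      rfl
    have h2 : ((∑ t ∈ e', s' * (u t).val : ℕ) : ℤ)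
        = ∑ t : Fin m, (if t ∈ e' then (s' : ℤ) else 0) * ((u t).val : ℤ) := by
      simp only [ite_mul, zero_mul, Finset.sum_ite_mem, Finset.univ_inter]
      push_cast
      rfl
    rw [h1, h2, ← Finset.sum_sub_distrib]
    exact Finset.sum_congr rfl fun t _ => by rw [hc]; ring
  -- factor the sum
  have hfac : (∑ u : Fin m → ZMod r,
      ω ^ (((∑ t ∈ e, s * (u t).val : ℕ) : ℤ) - ((∑ t ∈ e', s' * (u t).val : ℕ) : ℤ)))
      = ∏ t : Fin m, ∑ x : ZMod r, (ω ^ c t) ^ x.val := by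
    rw [Fintype.prod_sum]
    refine Finset.sum_congr rfl fun u _ => ?_
    rw [hexp u, zpow_sum_aux ω hω0]
    refine Finset.prod_congr rfl fun t _ => ?_
    rw [_root_.zpow_mul, zpow_natCast]
  rw [hfac]
  have hfactor : ∀ t : Fin m, ∑ x : ZMod r, (ω ^ c t) ^ x.val
      = if (r : ℤ) ∣ c t then (r : ℂ) else 0 := by
    intro t
    rw [sum_zmod_pow r _ (by rw [← zpow_natCast, ← _root_.zpow_mul, mul_comm, _root_.zpow_mul,
      zpow_natCast, hωr, _root_.one_zpow])]
    exact if_congr (hprim.zpow_eq_one_iff_dvd _) rfl rfl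
  simp only [hfactor]
  have hrs : ¬ (r : ℤ) ∣ (s : ℤ) := by
    intro h
    have := Int.le_of_dvd (by exact_mod_cast hs1) h
    omega
  have hrs' : ¬ (r : ℤ) ∣ (s' : ℤ) := by
    intro h
    have := Int.le_of_dvd (by exact_mod_cast hs1') h
    omega
  by_cases hmain : e = e' ∧ s = s'
  · obtain ⟨hee, hss⟩ := hmain
    rw [if_pos ⟨hee, hss⟩]
    have hz : ∀ t : Fin m, c t = 0 := by
      intro t; rw [hc]; simp [hee, hss]
    rw [Finset.prod_congr rfl fun t _ =>
      (by rw [if_pos (by rw [hz t]; exact dvd_zero _)] :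
        (if (r : ℤ) ∣ c t then (r : ℂ) else 0) = (r : ℂ))]
    simp
  · rw [if_neg hmain]
    -- find a bad coordinate
    have : ∃ t : Fin m, ¬ (r : ℤ) ∣ c t := by
      by_cases hee : e = e'
      · have hss : s ≠ s' := fun h => hmain ⟨hee, h⟩
        obtain ⟨t, ht⟩ := he
        refine ⟨t, ?_⟩
        rw [hc]
        simp only [ht, hee ▸ ht, if_pos]
        intro hd
        have h0 : (s : ℤ) - (s' : ℤ) = 0 :=
          Int.eq_zero_of_abs_lt_dvd hd (by rw [abs_sub_lt_iff]; constructor <;> omega)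
        omega
      · have : ∃ t : Fin m, (t ∈ e ∧ t ∉ e') ∨ (t ∈ e' ∧ t ∉ e) := by
          by_contra hcon
          push_neg at hcon
          apply hee
          ext t
          have := hcon t
          tauto
        obtain ⟨t, ht⟩ := this
        refine ⟨t, ?_⟩
        rcases ht with ⟨h1, h2⟩ | ⟨h1, h2⟩
        · rw [hc]; simpa [h1, h2, sub_zero] using hrs
        · rw [hc]; simpa [h1, h2, zero_sub, dvd_neg] using hrs'
    obtain ⟨t, ht⟩ := this
    exact Finset.prod_eq_zero (Finset.mem_univ t) (if_neg ht)
end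

section
/- Let r ≥ 1, ω = exp(2πi/r), n ≥ 1. For e : Finset (Fin n) and s : ℕ let K^{(e,s)} : Matrix (Fin n → ZMod r) (Fin n → ZMod r) ℂ be the permutation matrix with K^{(e,s)} j i = 1 if (j t = i t + s for t ∈ e and j t = i t for t ∉ e), else 0. Let E be a finite set of pairs (e, s) with e ⊆ Fin n nonempty and 1 ≤ s ≤ r−1, let α : E → ℝ, λ = Σ_{(e,s)∈E} α(e,s), and let π⋆ i = 1/r if i is constant, else 0. Let P = exp((−λ) • 1 + Σ_{(e,s)∈E} α(e,s) • K^{(e,s)}).mulVec π⋆ and let F_n j i = ω^{Σ_t (i t).val·(j t).val}. Then for every i : Fin n → ZMod r: if Σ_t i t = 0 in ZMod r then (F_n.mulVec P) i = exp(Σ_{(e,s)∈E} α(e,s)·(ω^{s·Σ_{t∈e}(i t).val} − 1)), and otherwise (F_n.mulVec P) i = 0. -/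
open Matrix
open NormedSpace

/-!
Every row `i ↦ ω ^ ⟨i, k⟩` of the character matrix `F` is an additive character of
`(ZMod r)ⁿ`, hence a common left eigenvector of all translation matrices `K^{(e,s)}`, with
eigenvalue its value at the translation vector. So `F` intertwines the rate matrix with a
diagonal matrix, and therefore `exp` of the rate matrix with the exponential of that diagonal.
What is left is `F π⋆`: summing a character over the constant strings gives `r` or `0`
according as the character is trivial on the diagonal, i.e. as `∑ t, k t = 0`.
-/

-- Matrices have no global normed-ring instance; the `L∞` operator norm induces the product
-- topology used by `exp`, so it can be chosen locally.
theorem Matrix.semiconjBy_exp_right {m 𝔸 : Type*} [Fintype m] [DecidableEq m] [NormedRing 𝔸]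
    [NormedAlgebra ℚ 𝔸] [CompleteSpace 𝔸] {X A B : Matrix m m 𝔸} (h : SemiconjBy X A B) :
    SemiconjBy X (exp A) (exp B) :=
  @SemiconjBy.exp_right _ Matrix.linftyOpNormedRing Matrix.linftyOpNormedAlgebra
    (inferInstanceAs (CompleteSpace (m → m → 𝔸))) _ _ _ h

theorem Matrix.mulVec_exp_mulVec_apply_of_semiconjBy_diagonal {m : Type*} [Fintype m]
    [DecidableEq m] {X A : Matrix m m ℂ} {d : m → ℂ} (h : SemiconjBy X A (diagonal d))
    (v : m → ℂ) (k : m) : (X *ᵥ (exp A *ᵥ v)) k = Complex.exp (d k) * (X *ᵥ v) k := by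
  rw [mulVec_mulVec, (semiconjBy_exp_right h).eq, exp_diagonal, ← mulVec_mulVec,
    mulVec_diagonal, Pi.coe_exp, Complex.exp_eq_exp_ℂ]

theorem semiconjBy_smul_one_add_sum_smul {ι R 𝔸 : Type*} [CommSemiring R] [Semiring 𝔸]
    [Algebra R 𝔸] {X : 𝔸} {M N : ι → 𝔸} (c : R) (s : Finset ι) (a : ι → R)
    (h : ∀ p ∈ s, SemiconjBy X (M p) (N p)) :
    SemiconjBy X (c • 1 + ∑ p ∈ s, a p • M p) (c • 1 + ∑ p ∈ s, a p • N p) := by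
  have hsum : X * ∑ p ∈ s, a p • M p = (∑ p ∈ s, a p • N p) * X := by
    rw [Finset.mul_sum, Finset.sum_mul]
    exact Finset.sum_congr rfl fun p hp => ((h p hp).smul_right (a p)).eq
  exact ((SemiconjBy.one_right X).smul_right c).add_right hsum

theorem Matrix.smul_one_add_sum_smul_diagonal {m ι R : Type*} [DecidableEq m] [CommSemiring R]
    (c : R) (s : Finset ι) (a : ι → R) (d : ι → m → R) :
    c • (1 : Matrix m m R) + ∑ p ∈ s, a p • diagonal (d p) =
      diagonal fun k => c + ∑ p ∈ s, a p * d p k := by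
  ext k l
  by_cases hkl : k = l
  · subst hkl
    simp [Matrix.sum_apply]
  · simp [Matrix.sum_apply, hkl]

section Translation

variable {ι A : Type*}

def translationMatrix [Add A] [DecidableEq A] (R : Type*) [Zero R] [One R] (x : A) :
    Matrix A A R :=
  of fun j i => if j = i + x then 1 else 0

theorem eq_add_indicator_iff [AddZeroClass A] {e : Finset ι} {a : A} {i j : ι → A} :
    j = i + (e : Set ι).indicator (fun _ => a) ↔
      (∀ t ∈ e, j t = i t + a) ∧ ∀ t ∉ e, j t = i t := by
  constructor
  · rintro rfl
    exact ⟨fun t ht => by simp [ht], fun t ht => by simp [ht]⟩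
  · rintro ⟨hin, hout⟩
    funext t
    by_cases ht : t ∈ e <;> simp [ht, hin, hout]

theorem indicator_dotProduct [Fintype ι] [NonUnitalNonAssocSemiring A] (e : Finset ι) (a : A)
    (k : ι → A) : (e : Set ι).indicator (fun _ => a) ⬝ᵥ k = a * ∑ t ∈ e, k t := by
  classical
  simp [dotProduct, Set.indicator_apply, Finset.mul_sum, ite_mul]

theorem sum_ite_exists_forall_eq [Fintype ι] [DecidableEq ι] [Nonempty ι] [Fintype A]
    [DecidablePred fun i : ι → A => ∃ c, ∀ t, i t = c] {M : Type*} [AddCommMonoid M]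
    (f : (ι → A) → M) :
    ∑ i, (if ∃ c, ∀ t, i t = c then f i else 0) = ∑ c, f fun _ => c := by
  have hconst : Finset.univ.filter (fun i : ι → A => ∃ c, ∀ t, i t = c) =
      Finset.univ.map ⟨fun c _ => c, Function.const_injective⟩ := by
    ext i
    simp only [Finset.mem_filter, Finset.mem_univ, true_and, Finset.mem_map, funext_iff]
    exact exists_congr fun c => forall_congr' fun t => eq_comm
  rw [← Finset.sum_filter, hconst, Finset.sum_map]
  rfl

end Translation

section Fourier

variable {ι A R : Type*} [Fintype ι] [CommRing A] [CommRing R]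

def fourierMatrix (ψ : AddChar A R) : Matrix (ι → A) (ι → A) R :=
  of fun k i => ψ (i ⬝ᵥ k)

variable [Fintype A] [DecidableEq A] [DecidableEq ι]

theorem fourierMatrix_mul_translationMatrix (ψ : AddChar A R) (x : ι → A) :
    fourierMatrix ψ * translationMatrix R x =
      diagonal (fun k => ψ (x ⬝ᵥ k)) * fourierMatrix ψ := by
  ext k i
  rw [mul_apply, diagonal_mul]
  simp [fourierMatrix, translationMatrix, add_dotProduct, AddChar.map_add_eq_mul, mul_comm]

theorem fourierMatrix_mulVec_ite_exists_forall_eq [Nonempty ι]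
    [DecidablePred fun i : ι → A => ∃ c, ∀ t, i t = c] [IsDomain R]
    {ψ : AddChar A R} (hψ : ψ.IsPrimitive) (b : R) (k : ι → A) :
    (fourierMatrix ψ *ᵥ fun i => if ∃ c, ∀ t, i t = c then b else 0) k =
      if ∑ t, k t = 0 then Fintype.card A * b else 0 := by
  have hconst : ∀ c : A, (fun _ => c) ⬝ᵥ k = c * ∑ t, k t := fun c => by
    simp [dotProduct, Finset.mul_sum]
  rw [mulVec, dotProduct]
  simp only [fourierMatrix, of_apply, mul_ite, mul_zero]
  rw [sum_ite_exists_forall_eq]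
  simp_rw [hconst, ← Finset.sum_mul]
  rw [AddChar.sum_mulShift _ hψ]
  split_ifs <;> simp

end Fourier

section ZModChar

variable {ι C : Type*} [CommMonoid C] {r : ℕ} [NeZero r] {ζ : C} (hζ : ζ ^ r = 1)
include hζ

theorem AddChar.zmodChar_dotProduct [Fintype ι] (x k : ι → ZMod r) :
    zmodChar r hζ (x ⬝ᵥ k) = ζ ^ ∑ t, (x t).val * (k t).val := by
  rw [← zmodChar_apply' hζ]
  push_cast [ZMod.natCast_val, ZMod.cast_id]
  rfl

theorem AddChar.zmodChar_natCast_mul_sum (s : ℕ) (e : Finset ι) (k : ι → ZMod r) :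
    zmodChar r hζ (s * ∑ t ∈ e, k t) = ζ ^ (s * ∑ t ∈ e, (k t).val) := by
  rw [← zmodChar_apply' hζ]
  push_cast [ZMod.natCast_val, ZMod.cast_id]
  rfl

end ZModChar

theorem Zr_model_fourier_components_general
    (r : ℕ) [NeZero r] (n : ℕ) (hn : 1 ≤ n)
    (ω : ℂ) (hω : ω = Complex.exp (2 * Real.pi * Complex.I / r))
    (K : Finset (Fin n) → ℕ → Matrix (Fin n → ZMod r) (Fin n → ZMod r) ℂ)
    (hK : ∀ (e : Finset (Fin n)) (s : ℕ) (j i : Fin n → ZMod r),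
      K e s j i = if (∀ t ∈ e, j t = i t + (s : ZMod r)) ∧ (∀ t ∉ e, j t = i t)
        then 1 else 0)
    (E : Finset (Finset (Fin n) × ℕ))
    (α : Finset (Fin n) × ℕ → ℝ)
    (lam : ℝ) (hlam : lam = ∑ p ∈ E, α p)
    (πs : (Fin n → ZMod r) → ℂ)
    (hπ : ∀ i : Fin n → ZMod r,
      πs i = if ∃ c : ZMod r, ∀ t : Fin n, i t = c then 1 / (r : ℂ) else 0)
    (P : (Fin n → ZMod r) → ℂ)
    (hP : P = (exp ((-lam : ℂ) • (1 : Matrix (Fin n → ZMod r) (Fin n → ZMod r) ℂ)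
        + ∑ p ∈ E, (α p : ℂ) • K p.1 p.2)).mulVec πs)
    (F : Matrix (Fin n → ZMod r) (Fin n → ZMod r) ℂ)
    (hF : ∀ j i : Fin n → ZMod r, F j i = ω ^ (∑ t : Fin n, (i t).val * (j t).val)) :
    ∀ i : Fin n → ZMod r,
      F.mulVec P i =
        if (∑ t : Fin n, i t) = 0
        then Complex.exp (∑ p ∈ E, (α p : ℂ) * (ω ^ (p.2 * ∑ t ∈ p.1, (i t).val) - 1))
        else 0 := by
  intro i
  have hprim : IsPrimitiveRoot ω r := hω ▸ Complex.isPrimitiveRoot_exp r (NeZero.ne r)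
  let ψ : AddChar (ZMod r) ℂ := AddChar.zmodChar r hprim.pow_eq_one
  have hψ : ψ.IsPrimitive := AddChar.zmodChar_primitive_of_primitive_root r hprim
  have : Nonempty (Fin n) := ⟨⟨0, hn⟩⟩
  have hFψ : F = fourierMatrix ψ := by
    ext k j
    rw [hF, fourierMatrix, of_apply, AddChar.zmodChar_dotProduct]
  have hKψ : ∀ e s,
      K e s = translationMatrix ℂ ((e : Set (Fin n)).indicator fun _ => (s : ZMod r)) := by
    intro e s
    ext j k
    rw [hK, translationMatrix, of_apply]
    exact if_congr eq_add_indicator_iff.symm rfl rfl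
  have hsemi : SemiconjBy F ((-lam : ℂ) • 1 + ∑ p ∈ E, (α p : ℂ) • K p.1 p.2)
      (diagonal fun k => -lam + ∑ p ∈ E, (α p : ℂ) * ω ^ (p.2 * ∑ t ∈ p.1, (k t).val)) := by
    rw [← smul_one_add_sum_smul_diagonal]
    refine semiconjBy_smul_one_add_sum_smul _ _ _ fun p _ => ?_
    rw [hFψ, hKψ, SemiconjBy, fourierMatrix_mul_translationMatrix]
    simp only [indicator_dotProduct, ψ, AddChar.zmodChar_natCast_mul_sum]
  rw [hP, mulVec_exp_mulVec_apply_of_semiconjBy_diagonal hsemi, funext hπ, hFψ,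
    fourierMatrix_mulVec_ite_exists_forall_eq hψ, ZMod.card]
  split_ifs
  · rw [mul_one_div_cancel (Nat.cast_ne_zero.2 (NeZero.ne r)), mul_one, hlam]
    simp [mul_sub, Finset.sum_sub_distrib, neg_add_eq_sub]
  · rw [mul_zero]

/-- First part of the Hadamard-type inversion of the ℤ_r model: the
Fourier transform of a phylogenetic tensor has components
`exp(Σ_{(e,s)∈E} α(e,s)·(ω^{s·Σ_{t∈e}(i t).val} − 1))` on index strings summing to zero,
and `0` otherwise. -/
theorem Zr_model_fourier_components
    (r : ℕ) [NeZero r] (hr : 1 ≤ r) (n : ℕ) (hn : 1 ≤ n)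
    (ω : ℂ) (hω : ω = Complex.exp (2 * Real.pi * Complex.I / r))
    (K : Finset (Fin n) → ℕ → Matrix (Fin n → ZMod r) (Fin n → ZMod r) ℂ)
    (hK : ∀ (e : Finset (Fin n)) (s : ℕ) (j i : Fin n → ZMod r),
      K e s j i = if (∀ t ∈ e, j t = i t + (s : ZMod r)) ∧ (∀ t ∉ e, j t = i t)
        then 1 else 0)
    (E : Finset (Finset (Fin n) × ℕ))
    (hE : ∀ p ∈ E, p.1.Nonempty ∧ 1 ≤ p.2 ∧ p.2 ≤ r - 1)
    (α : Finset (Fin n) × ℕ → ℝ)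
    (lam : ℝ) (hlam : lam = ∑ p ∈ E, α p)
    (πs : (Fin n → ZMod r) → ℂ)
    (hπ : ∀ i : Fin n → ZMod r,
      πs i = if ∃ c : ZMod r, ∀ t : Fin n, i t = c then 1 / (r : ℂ) else 0)
    (P : (Fin n → ZMod r) → ℂ)
    (hP : P = (exp ((-lam : ℂ) • (1 : Matrix (Fin n → ZMod r) (Fin n → ZMod r) ℂ)
        + ∑ p ∈ E, (α p : ℂ) • K p.1 p.2)).mulVec πs)
    (F : Matrix (Fin n → ZMod r) (Fin n → ZMod r) ℂ)
    (hF : ∀ j i : Fin n → ZMod r, F j i = ω ^ (∑ t : Fin n, (i t).val * (j t).val)) :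
    ∀ i : Fin n → ZMod r,
      F.mulVec P i =
        if (∑ t : Fin n, i t) = 0
        then Complex.exp (∑ p ∈ E, (α p : ℂ) * (ω ^ (p.2 * ∑ t ∈ p.1, (i t).val) - 1))
        else 0 :=
  Zr_model_fourier_components_general r n hn ω hω K hK E α lam hlam πs hπ P hP F hF
end
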